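/- arXiv:1910.10918 — 2 statements merged into one kernel-verified Lean document; each statement's English description precedes it below -/
import Mathlib

section
/- If A ⊂ ℝ³ is an imaginary cube of a cube C, then every edge of C contains at least one point of A. -/
/- STATEMENT 4: If `A ⊆ ℝ³` is an imaginary cube of a cube `C`, then every edge of `C`
contains a point of `A`. An edge of the cube `a Q C₀ + w` is the image of an edge of
`C₀ = [-1,1]³`, i.e. of a set `{x ∈ C₀ | ∀ j ≠ i, x j = ε j}` with `ε j = ±1`. -/

noncomputable section
open Matrix

abbrev E3 := EuclideanSpace ℝ (Fin 3)

/-- The standard cube `C₀ = [-1,1]³`. -/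
def C0 : Set E3 := {x | ∀ i, x i ∈ Set.Icc (-1 : ℝ) 1}

/-- The cube `a • Q C₀ + w`. -/
def cubeImage (a : ℝ) (Q : Matrix (Fin 3) (Fin 3) ℝ) (w : E3) : Set E3 :=
  (fun x => a • Matrix.toEuclideanLin Q x + w) '' C0

/-- The plane parallel to the face of the cube `a Q C₀ + w` orthogonal to direction `Q eᵢ`:
the span of the images of the other two coordinate vectors. -/
def facePlane (Q : Matrix (Fin 3) (Fin 3) ℝ) (i : Fin 3) : Submodule ℝ E3 :=
  Submodule.span ℝ {y | ∃ j ≠ i, y = Matrix.toEuclideanLin Q (EuclideanSpace.single j 1)}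

/-- `A` is an imaginary cube of the cube with data `(a, Q, w)`: the three projections of `A`
in the face directions agree with those of the cube. -/
def IsImaginaryCubeData (A : Set E3) (a : ℝ) (Q : Matrix (Fin 3) (Fin 3) ℝ) (w : E3) : Prop :=
  ∀ i : Fin 3,
    (Submodule.orthogonalProjectionOnto (facePlane Q i)) '' A =
      (Submodule.orthogonalProjectionOnto (facePlane Q i)) '' (cubeImage a Q w)

/-- `A` is an imaginary cube of the set `C`. -/
def IsImaginaryCubeOf (A C : Set E3) : Prop :=
  ∃ (a : ℝ) (Q : Matrix (Fin 3) (Fin 3) ℝ) (w : E3),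
    0 < a ∧ Q ∈ Matrix.specialOrthogonalGroup (Fin 3) ℝ ∧ C = cubeImage a Q w ∧
      IsImaginaryCubeData A a Q w

/-- `A` is an imaginary cube. -/
def IsImaginaryCube (A : Set E3) : Prop := ∃ C : Set E3, IsImaginaryCubeOf A C

/-
Let `b` be the orthonormal basis of columns of `Q`. For `a > 0` the cube `a Q C₀ + w` is the box
`{p | ∀ j, |⟪b j, p - w⟫| ≤ a}`, and the projection along `b k` keeps every coordinate
`⟪b j, ·⟫` with `j ≠ k`; as each coordinate is kept by some face projection, an imaginary cube
lies inside its cube. A cube determines its edge directions up to sign: if two bases `b, b'`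
describe the same cube, testing the inclusion on vertices gives `a ∑ₖ |⟪b k, b' j⟫| ≤ a'`, and
since ℓ¹-norms of unit vectors are at least `1`, some `b' i'` is parallel to `b i`. Projecting the
vertex `a Q ε + w` along `b' i'` therefore hits a point of `A` which lies in the cube and shares
all coordinates but the `i`-th with the vertex: a point of the edge.
-/

open scoped RealInnerProductSpace

namespace OrthonormalBasis

variable {ι E : Type*} [Fintype ι] [NormedAddCommGroup E] [InnerProductSpace ℝ E]

def cube (b : OrthonormalBasis ι ℝ E) (a : ℝ) (w : E) : Set E :=
  {p | ∀ j, |⟪b j, p - w⟫| ≤ a}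

variable (b b' : OrthonormalBasis ι ℝ E)

lemma sum_sq_abs_inner {v : E} (hv : ‖v‖ = 1) : ∑ k, |⟪b k, v⟫| ^ 2 = 1 := by
  simpa [hv] using b.sum_sq_norm_inner_right v

lemma abs_inner_le_one {v : E} (hv : ‖v‖ = 1) (k : ι) : |⟪b k, v⟫| ≤ 1 :=
  (abs_real_inner_le_norm _ _).trans (by simp [hv])

lemma one_le_sum_abs_inner {v : E} (hv : ‖v‖ = 1) : 1 ≤ ∑ k, |⟪b k, v⟫| :=
  calc 1 = ∑ k, |⟪b k, v⟫| ^ 2 := (b.sum_sq_abs_inner hv).symm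
    _ ≤ ∑ k, |⟪b k, v⟫| := Finset.sum_le_sum fun k _ => by
        nlinarith [abs_nonneg ⟪b k, v⟫, b.abs_inner_le_one hv k]

lemma exists_abs_inner_eq_one {v : E} (hv : ‖v‖ = 1) (h : ∑ k, |⟪b k, v⟫| ≤ 1) :
    ∃ k, |⟪b k, v⟫| = 1 := by
  have hne : (Finset.univ : Finset ι).Nonempty :=
    Finset.nonempty_of_sum_ne_zero (by rw [b.sum_sq_abs_inner hv]; exact one_ne_zero)
  obtain ⟨k, -, hk⟩ := Finset.exists_max_image Finset.univ (fun k => |⟪b k, v⟫|) hne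
  refine ⟨k, le_antisymm (b.abs_inner_le_one hv k) ?_⟩
  calc 1 = ∑ l, |⟪b l, v⟫| ^ 2 := (b.sum_sq_abs_inner hv).symm
    _ ≤ ∑ l, |⟪b k, v⟫| * |⟪b l, v⟫| := Finset.sum_le_sum fun l hl => by
        rw [sq]; exact mul_le_mul_of_nonneg_right (hk l hl) (abs_nonneg _)
    _ = |⟪b k, v⟫| * ∑ l, |⟪b l, v⟫| := Finset.mul_sum _ _ _ |>.symm
    _ ≤ |⟪b k, v⟫| := mul_le_of_le_one_right (abs_nonneg _) h

lemma mul_sum_abs_inner_le_of_cube_subset {a a' : ℝ} {w w' : E} (ha : 0 ≤ a)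
    (h : b.cube a w ⊆ b'.cube a' w') (j : ι) : a * ∑ k, |⟪b k, b' j⟫| ≤ a' := by
  -- `w ± a y` are opposite vertices of the first cube, on a diagonal maximising `⟪b' j, ·⟫`
  set y := b.repr.symm (WithLp.toLp 2 fun k => (SignType.sign ⟪b k, b' j⟫ : ℝ))
  have hy : ⟪b' j, y⟫ = ∑ k, |⟪b k, b' j⟫| := by
    simp only [y, ← b.sum_repr_symm, inner_sum, real_inner_smul_right]
    refine Finset.sum_congr rfl fun k _ => ?_
    rw [real_inner_comm, mul_comm, self_mul_sign]
  have hvertex : ∀ t : ℝ, |t| ≤ 1 → w + (t * a) • y ∈ b'.cube a' w' := fun t ht => h fun k => by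
    have hsign : |(SignType.sign ⟪b k, b' j⟫ : ℝ)| ≤ 1 := by
      rcases SignType.sign ⟪b k, b' j⟫ with _ | _ | _ <;> simp
    rw [add_sub_cancel_left, real_inner_smul_right, ← b.repr_apply_apply,
      LinearIsometryEquiv.apply_symm_apply, abs_mul, abs_mul, abs_of_nonneg ha]
    calc |t| * a * |(SignType.sign ⟪b k, b' j⟫ : ℝ)|
        = a * (|t| * |(SignType.sign ⟪b k, b' j⟫ : ℝ)|) := by ring
      _ ≤ a * 1 := mul_le_mul_of_nonneg_left (mul_le_one₀ ht (abs_nonneg _) hsign) ha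
      _ = a := mul_one a
  have hinner : ∀ t : ℝ,
      ⟪b' j, w + (t * a) • y - w'⟫ = ⟪b' j, w - w'⟫ + t * (a * ∑ k, |⟪b k, b' j⟫|) := fun t => by
    rw [add_sub_right_comm, inner_add_right, real_inner_smul_right, hy, mul_assoc]
  have hpos := hvertex 1 (by norm_num) j
  have hneg := hvertex (-1) (by norm_num) j
  rw [hinner] at hpos hneg
  linarith [(abs_le.1 hpos).2, (abs_le.1 hneg).1]

lemma exists_eq_smul_of_cube_eq {a a' : ℝ} {w w' : E} (ha : 0 < a) (ha' : 0 < a')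
    (h : b.cube a w = b'.cube a' w') (i : ι) : ∃ i', ∃ r : ℝ, b' i' = r • b i := by
  have haa' : a ≤ a' :=
    (le_mul_of_one_le_right ha.le (b.one_le_sum_abs_inner (b'.norm_eq_one i))).trans
      (b.mul_sum_abs_inner_le_of_cube_subset b' ha.le h.subset i)
  have hsum : ∑ k, |⟪b' k, b i⟫| ≤ 1 :=
    (mul_le_iff_le_one_right ha').1
      ((b'.mul_sum_abs_inner_le_of_cube_subset b ha'.le h.superset i).trans haa')
  obtain ⟨i', hi'⟩ := b'.exists_abs_inner_eq_one (b.norm_eq_one i) hsum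
  obtain ⟨-, r, -, hr⟩ := (abs_real_inner_div_norm_mul_norm_eq_one_iff (b i) (b' i')).1
    (by simpa [real_inner_comm] using hi')
  exact ⟨i', r, hr⟩

lemma mem_span_image_compl_of_inner_eq_zero {i : ι} {v : E} (hv : ⟪b i, v⟫ = 0) :
    v ∈ Submodule.span ℝ (b '' {i}ᶜ) := by
  rw [← b.sum_repr' v]
  refine Submodule.sum_mem _ fun k _ => ?_
  rcases eq_or_ne k i with rfl | hk
  · simp [hv]
  · exact Submodule.smul_mem _ _ (Submodule.subset_span ⟨k, hk, rfl⟩)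

end OrthonormalBasis

lemma Submodule.inner_eq_of_orthogonalProjectionOnto_eq {𝕜 F : Type*} [RCLike 𝕜]
    [NormedAddCommGroup F] [InnerProductSpace 𝕜 F] (K : Submodule 𝕜 F)
    [K.HasOrthogonalProjection] {u p q : F} (hu : u ∈ K)
    (h : K.orthogonalProjectionOnto p = K.orthogonalProjectionOnto q) :
    inner 𝕜 u p = inner 𝕜 u q := by
  rw [← K.inner_orthogonalProjectionOnto_eq_of_mem_left ⟨u, hu⟩, h,
    K.inner_orthogonalProjectionOnto_eq_of_mem_left]

namespace Matrix.orthogonalGroup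

variable {n : Type*} [Fintype n] [DecidableEq n] {Q : Matrix n n ℝ} (hQ : Q ∈ orthogonalGroup n ℝ)

def colBasis : OrthonormalBasis n ℝ (EuclideanSpace ℝ n) :=
  .ofRepr (Unitary.linearIsometryEquiv ⟨toEuclideanCLM (𝕜 := ℝ) Q, Unitary.map_mem _ hQ⟩).symm

lemma colBasis_repr_symm (x : EuclideanSpace ℝ n) :
    (colBasis hQ).repr.symm x = toEuclideanLin Q x :=
  rfl

lemma colBasis_apply (j : n) :
    colBasis hQ j = toEuclideanLin Q (EuclideanSpace.single j 1) := by
  rw [← colBasis_repr_symm, OrthonormalBasis.repr_symm_single]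

lemma inner_colBasis_smul_add (a : ℝ) (x w : EuclideanSpace ℝ n) (j : n) :
    ⟪colBasis hQ j, a • toEuclideanLin Q x + w⟫ = a * x j + ⟪colBasis hQ j, w⟫ := by
  rw [inner_add_right, real_inner_smul_right, ← colBasis_repr_symm hQ,
    ← OrthonormalBasis.repr_apply_apply, LinearIsometryEquiv.apply_symm_apply]

end Matrix.orthogonalGroup

open Matrix.orthogonalGroup

lemma cubeImage_eq_cube {Q : Matrix (Fin 3) (Fin 3) ℝ} (hQ : Q ∈ orthogonalGroup (Fin 3) ℝ)
    {a : ℝ} (ha : 0 < a) (w : E3) :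
    cubeImage a Q w = (colBasis hQ).cube a w := by
  ext p
  constructor
  · rintro ⟨x, hx, rfl⟩ j
    rw [add_sub_cancel_right, ← add_zero (a • _), inner_colBasis_smul_add, inner_zero_right,
      add_zero, abs_mul, abs_of_pos ha]
    exact mul_le_of_le_one_right ha.le (abs_le.2 (hx j))
  · intro hp
    refine ⟨a⁻¹ • (colBasis hQ).repr (p - w), fun j => ?_, ?_⟩
    · rw [PiLp.smul_apply, OrthonormalBasis.repr_apply_apply, smul_eq_mul, Set.mem_Icc,
        ← abs_le, abs_mul, abs_inv, abs_of_pos ha, inv_mul_le_one₀ ha]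
      exact hp j
    · show a • toEuclideanLin Q (a⁻¹ • _) + w = p
      rw [map_smul, ← colBasis_repr_symm hQ, LinearIsometryEquiv.symm_apply_apply, smul_smul,
        mul_inv_cancel₀ ha.ne', one_smul, sub_add_cancel]

lemma facePlane_eq_span {Q : Matrix (Fin 3) (Fin 3) ℝ} (hQ : Q ∈ orthogonalGroup (Fin 3) ℝ)
    (i : Fin 3) :
    facePlane Q i = Submodule.span ℝ (colBasis hQ '' {i}ᶜ) := by
  unfold facePlane
  congr 1
  ext y
  simp only [Set.mem_ofPred_eq, Set.mem_image, Set.mem_compl_singleton_iff, colBasis_apply hQ,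
    eq_comm (a := y)]

lemma IsImaginaryCubeData.subset_cubeImage {A : Set E3} {a : ℝ} {Q : Matrix (Fin 3) (Fin 3) ℝ}
    {w : E3} (hA : IsImaginaryCubeData A a Q w) (ha : 0 < a)
    (hQ : Q ∈ orthogonalGroup (Fin 3) ℝ) : A ⊆ cubeImage a Q w := by
  intro p hp
  rw [cubeImage_eq_cube hQ ha]
  intro j
  obtain ⟨k, hkj⟩ := exists_ne j
  obtain ⟨c, hc, hpc⟩ := hA k ▸ Set.mem_image_of_mem _ hp
  rw [cubeImage_eq_cube hQ ha] at hc
  have hjk : colBasis hQ j ∈ facePlane Q k := by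
    rw [facePlane_eq_span hQ]
    exact Submodule.subset_span ⟨j, hkj.symm, rfl⟩
  rw [inner_sub_right, ← (facePlane Q k).inner_eq_of_orthogonalProjectionOnto_eq hjk hpc,
    ← inner_sub_right]
  exact hc j

theorem imaginaryCube_meets_edges (A C : Set E3) (h : IsImaginaryCubeOf A C)
    (a : ℝ) (Q : Matrix (Fin 3) (Fin 3) ℝ) (w : E3)
    (ha : 0 < a) (hQ : Q ∈ Matrix.specialOrthogonalGroup (Fin 3) ℝ)
    (hC : C = cubeImage a Q w)
    (i : Fin 3) (ε : Fin 3 → ℝ) (hε : ∀ j, ε j = 1 ∨ ε j = -1) :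
    ∃ p ∈ A, ∃ x ∈ C0, (∀ j ≠ i, x j = ε j) ∧ p = a • Matrix.toEuclideanLin Q x + w := by
  obtain ⟨a', Q', w', ha', hQ', hC', hA⟩ := h
  have hO := (mem_specialOrthogonalGroup_iff.1 hQ).1
  have hO' := (mem_specialOrthogonalGroup_iff.1 hQ').1
  have hcube : (colBasis hO).cube a w = (colBasis hO').cube a' w' := by
    rw [← cubeImage_eq_cube hO ha, ← cubeImage_eq_cube hO' ha', ← hC, hC']
  obtain ⟨i', r, hr⟩ := (colBasis hO).exists_eq_smul_of_cube_eq _ ha ha' hcube i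
  have hvertex : a • toEuclideanLin Q (WithLp.toLp 2 ε) + w ∈ cubeImage a' Q' w' :=
    hC' ▸ hC ▸ ⟨_, fun j => by rcases hε j with h | h <;> simp [h], rfl⟩
  obtain ⟨p, hpA, hpv⟩ := hA i' ▸ Set.mem_image_of_mem _ hvertex
  obtain ⟨x, hx, rfl⟩ : p ∈ cubeImage a Q w := hC ▸ hC' ▸ hA.subset_cubeImage ha' hO' hpA
  refine ⟨_, hpA, x, hx, fun j hj => ?_, rfl⟩
  have hji' : colBasis hO j ∈ facePlane Q' i' := by
    rw [facePlane_eq_span hO']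
    refine (colBasis hO').mem_span_image_compl_of_inner_eq_zero ?_
    rw [hr, real_inner_smul_left, (colBasis hO).inner_eq_zero hj.symm, mul_zero]
  have hcoord := (facePlane Q' i').inner_eq_of_orthogonalProjectionOnto_eq hji' hpv
  rw [inner_colBasis_smul_add, inner_colBasis_smul_add, add_left_inj] at hcoord
  exact mul_left_cancel₀ ha.ne' hcoord
end
end

section
/- Let φ₁,...,φₙ : ℝ³ → ℝ³ be the homotheties φ_i(x) = c(x - p_i) + p_i with common ratio c ∈ (0,1) and centers p₁,...,pₙ ∈ ℝ³, and let A be the attractor of {φ₁,...,φₙ}. Then the convex hull of A equals the convex hull of {p₁,...,pₙ}. -/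
/-!
Each homothety maps the closed set `A` into itself, and its iterates contract any point of `A`
to the centre, so every centre `pᵢ` lies in `A`. Conversely `K = conv {pᵢ}` is closed, convex
and contains the centres, hence is mapped into itself by every `φᵢ`. If `x ∈ A` maximises
`d(·, K)` on `A` and `x = φᵢ y` with `y ∈ A`, then `d(x, K) ≤ c d(y, K) ≤ c d(x, K)`, so
`d(·, K)` vanishes on `A` and `A ⊆ K`.
-/

noncomputable section

open Set Metric Filter Topology AffineMap
open scoped NNReal

theorem Metric.infDist_le_mul_of_lipschitzWith_mapsTo {X : Type*} [PseudoMetricSpace X]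
    {f : X → X} {K : ℝ≥0} {s : Set X} (hf : LipschitzWith K f) (hfs : MapsTo f s s)
    (hs : s.Nonempty) (x : X) : infDist (f x) s ≤ K * infDist x s := by
  have : Nonempty s := hs.to_subtype
  calc infDist (f x) s ≤ ⨅ y : s, K * dist x y :=
        le_ciInf fun y => (infDist_le_dist_of_mem (hfs y.2)).trans (hf.dist_le_mul x y)
    _ = K * infDist x s := by rw [infDist_eq_iInf]; exact (Real.mul_iInf_of_nonneg K.2 _).symm

theorem subset_of_subset_iUnion_image_of_lipschitzWith {X ι : Type*} [PseudoMetricSpace X]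
    {f : ι → X → X} {K : ℝ≥0} {A s : Set X} (hK : K < 1) (hf : ∀ i, LipschitzWith K (f i))
    (hfs : ∀ i, MapsTo (f i) s s) (hA : IsCompact A) (hAf : A ⊆ ⋃ i, f i '' A)
    (hs : IsClosed s) (hsne : s.Nonempty) : A ⊆ s := by
  rcases A.eq_empty_or_nonempty with rfl | hAne
  · exact empty_subset s
  obtain ⟨a, haA, hmax⟩ :=
    hA.exists_isMaxOn hAne (continuous_infDist_pt s).continuousOn
  have ha : infDist a s = 0 := by
    obtain ⟨i, b, hbA, rfl⟩ := mem_iUnion.1 (hAf haA)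
    have hle : infDist (f i b) s ≤ K * infDist (f i b) s :=
      (infDist_le_mul_of_lipschitzWith_mapsTo (hf i) (hfs i) hsne b).trans
        (mul_le_mul_of_nonneg_left (hmax hbA) K.2)
    have : (K : ℝ) < 1 := hK
    nlinarith [infDist_nonneg (x := f i b) (s := s)]
  intro x hx
  rw [hs.mem_iff_infDist_zero hsne]
  exact le_antisymm (ha ▸ hmax hx) infDist_nonneg

theorem AffineMap.lipschitzWith_homothety {𝕜 V P : Type*} [NormedField 𝕜]
    [SeminormedAddCommGroup V] [NormedSpace 𝕜 V] [PseudoMetricSpace P] [NormedAddTorsor V P]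
    (x : P) (c : 𝕜) : LipschitzWith ‖c‖₊ (homothety x c) :=
  LipschitzWith.of_dist_le_mul fun y z => by
    rw [dist_eq_norm_vsub V, dist_eq_norm_vsub V, ← linearMap_vsub, homothety_linear]
    simp [norm_smul]

theorem center_mem_of_mapsTo_homothety {𝕜 V P : Type*} [NormedField 𝕜]
    [SeminormedAddCommGroup V] [NormedSpace 𝕜 V] [PseudoMetricSpace P] [NormedAddTorsor V P]
    {x : P} {c : 𝕜} (hc : ‖c‖ < 1) {s : Set P} (hs : IsClosed s) (hsne : s.Nonempty)
    (h : MapsTo (homothety x c) s s) : x ∈ s := by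
  obtain ⟨y, hy⟩ := hsne
  have hmem : ∀ k : ℕ, homothety x (c ^ k) y ∈ s := fun k => by
    induction k with
    | zero => simpa using hy
    | succ k ih => rw [pow_succ', homothety_mul_apply]; exact h ih
  have hlim : Tendsto (fun k : ℕ => homothety x (c ^ k) y) atTop (𝓝 x) := by
    have := ((lineMap_continuous (p := x) (q := y)).tendsto 0).comp
      (tendsto_pow_atTop_nhds_zero_of_norm_lt_one hc)
    simpa [Function.comp_def, homothety_eq_lineMap] using this
  exact hs.mem_of_tendsto hlim (Eventually.of_forall hmem)

theorem Convex.mapsTo_homothety {𝕜 E : Type*} [Field 𝕜] [LinearOrder 𝕜] [IsStrictOrderedRing 𝕜]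
    [AddCommGroup E] [Module 𝕜 E] {s : Set E} (hs : Convex 𝕜 s) {x : E} (hx : x ∈ s) {c : 𝕜}
    (hc : c ∈ Icc 0 1) : MapsTo (homothety x c) s s := fun _ hy => by
  rw [homothety_eq_lineMap]; exact hs.lineMap_mem hx hy hc

theorem convexHull_homothety_attractor (n : ℕ) (c : ℝ) (hc : c ∈ Set.Ioo (0 : ℝ) 1)
    (p : Fin n → E3) (A : Set E3) (hne : A.Nonempty) (hcpt : IsCompact A)
    (hinv : A = ⋃ i : Fin n, (fun x => c • (x - p i) + p i) '' A) :
    convexHull ℝ A = convexHull ℝ (Set.range p) := by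
  replace hinv : A = ⋃ i, homothety (p i) c '' A := hinv
  have hnorm : ‖c‖₊ < 1 := by
    rw [← NNReal.coe_lt_one, coe_nnnorm, Real.norm_of_nonneg hc.1.le]; exact hc.2
  have hmaps (i : Fin n) : MapsTo (homothety (p i) c) A A := fun x hx => by
    rw [hinv]; exact mem_iUnion.2 ⟨i, mem_image_of_mem _ hx⟩
  have hpA : range p ⊆ A := range_subset_iff.2 fun i =>
    center_mem_of_mapsTo_homothety (mod_cast hnorm) hcpt.isClosed hne (hmaps i)
  have hK : (convexHull ℝ (range p)).Nonempty := by
    obtain ⟨a, ha⟩ := hne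
    obtain ⟨i, -⟩ := mem_iUnion.1 (hinv ▸ ha)
    exact ⟨p i, subset_convexHull ℝ _ (mem_range_self i)⟩
  have hAK : A ⊆ convexHull ℝ (range p) :=
    subset_of_subset_iUnion_image_of_lipschitzWith hnorm
      (fun i => lipschitzWith_homothety (p i) c)
      (fun i => (convex_convexHull ℝ _).mapsTo_homothety
        (subset_convexHull ℝ _ (mem_range_self i)) ⟨hc.1.le, hc.2.le⟩)
      hcpt hinv.le ((finite_range p).isCompact_convexHull (𝕜 := ℝ)).isClosed hK
  exact (convexHull_min hAK (convex_convexHull ℝ _)).antisymm (convexHull_mono hpA)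
end
end
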